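/- Let R be a commutative Bezout ring of stable range 2 and let a ∈ R be a regular element. Then a is an adequate element if and only if the quotient ring R/aR is a semiregular ring, i.e. (R/aR)/J(R/aR) is von Neumann regular and idempotents lift modulo J(R/aR). -/

import Mathlib

/-- A regular element: a nonzero element that is not a zero divisor. -/
def IsRegularElem {R : Type*} [CommRing R] (a : R) : Prop :=
  a ≠ 0 ∧ ∀ x : R, a * x = 0 → x = 0

/-- Stable range 2. -/
def HasStableRange2 (R : Type*) [CommRing R] : Prop :=
  ∀ a b c : R, Ideal.span {a, b, c} = ⊤ →
    ∃ x y : R, Ideal.span {a + c * x, b + c * y} = ⊤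

/-- Stable range 1. -/
def HasStableRange1 (S : Type*) [CommRing S] : Prop :=
  ∀ a b : S, Ideal.span {a, b} = ⊤ → ∃ y : S, IsUnit (a + b * y)

/-- Inpseudo-irreducible element: any factorization is comaximal. -/
def IsInpseudoIrreducible {R : Type*} [CommRing R] (a : R) : Prop :=
  ∀ b c : R, a = b * c → Ideal.span {b, c} = ⊤

/-- Pseudo-irreducible element. -/
def IsPseudoIrreducible {R : Type*} [CommRing R] (a : R) : Prop :=
  ∀ b c : R, a = b * c → ¬IsUnit b → ¬IsUnit c → Ideal.span {b, c} ≠ ⊤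

/-- Adequate element of a Bezout ring. -/
def IsAdequateElem {R : Type*} [CommRing R] (a : R) : Prop :=
  ∀ b : R, ∃ r s : R, a = r * s ∧ Ideal.span {r, b} = ⊤ ∧
    ∀ s' : R, ¬IsUnit s' → s' ∣ s → Ideal.span {s', b} ≠ ⊤

/-- Avoidable element. -/
def IsAvoidableElem {R : Type*} [CommRing R] (a : R) : Prop :=
  ∀ b c : R, Ideal.span {a, b, c} = ⊤ →
    ∃ r s : R, a = r * s ∧ Ideal.span {r, b} = ⊤ ∧ Ideal.span {s, c} = ⊤ ∧
      Ideal.span {r, s} = ⊤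

/-- Gelfand element. -/
def IsGelfandElem {R : Type*} [CommRing R] (a : R) : Prop :=
  ∀ b c : R, Ideal.span {a, b, c} = ⊤ →
    ∃ r s : R, a = r * s ∧ Ideal.span {r, b} = ⊤ ∧ Ideal.span {s, c} = ⊤

/-- Semipotent element. -/
def IsSemipotentElem {R : Type*} [CommRing R] (a : R) : Prop :=
  ∀ b : R,
    Ideal.Quotient.mk (Ideal.span {a}) b ∉
      Ideal.jacobson (⊥ : Ideal (R ⧸ Ideal.span ({a} : Set R))) →
    ∃ r s : R, ¬IsUnit r ∧ ¬IsUnit s ∧ a = r * s ∧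
      Ideal.span {r, b} = ⊤ ∧ Ideal.span {r, s} = ⊤

/-- Gelfand ring. -/
def IsGelfandRing (S : Type*) [CommRing S] : Prop :=
  ∀ a b : S, a + b = 1 → ∃ r s : S, (1 + a * r) * (1 + b * s) = 0

/-- Clean ring: every element is a unit plus an idempotent. -/
def IsCleanRing (S : Type*) [CommRing S] : Prop :=
  ∀ a : S, ∃ u e : S, IsUnit u ∧ IsIdempotentElem e ∧ a = u + e

/-- Von Neumann regular ring. -/
def IsVNRegularRing (S : Type*) [CommRing S] : Prop :=
  ∀ a : S, ∃ x : S, a = a * x * a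

/-- Semiregular ring: S/J(S) is von Neumann regular and idempotents lift modulo J(S). -/
def IsSemiregularRing (S : Type*) [CommRing S] : Prop :=
  IsVNRegularRing (S ⧸ Ideal.jacobson (⊥ : Ideal S)) ∧
  ∀ x : S, IsIdempotentElem (Ideal.Quotient.mk (Ideal.jacobson (⊥ : Ideal S)) x) →
    ∃ e : S, IsIdempotentElem e ∧
      Ideal.Quotient.mk (Ideal.jacobson (⊥ : Ideal S)) e =
        Ideal.Quotient.mk (Ideal.jacobson (⊥ : Ideal S)) x

/-- Semipotent ring: every principal ideal not contained in the Jacobson radical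
contains a nonzero idempotent. -/
def IsSemipotentRing (S : Type*) [CommRing S] : Prop :=
  ∀ b : S, ¬(Ideal.span {b} ≤ Ideal.jacobson (⊥ : Ideal S)) →
    ∃ e : S, e ≠ 0 ∧ IsIdempotentElem e ∧ e ∈ Ideal.span ({b} : Set S)

/-- Indecomposable ring: the only idempotents are 0 and 1. -/
def IsIndecomposableRing (S : Type*) [CommRing S] : Prop :=
  ∀ e : S, IsIdempotentElem e → e = 0 ∨ e = 1

/-- Semihereditary ring: every finitely generated ideal is projective. -/
def IsSemihereditaryRing (R : Type*) [CommRing R] : Prop :=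
  ∀ I : Ideal R, I.FG → Module.Projective R I

/-- Regular range 1. -/
def HasRegularRange1 (R : Type*) [CommRing R] : Prop :=
  ∀ a b : R, Ideal.span {a, b} = ⊤ → ∃ t : R, IsRegularElem (a + b * t)

/-- Gelfand range 1. -/
def HasGelfandRange1 (R : Type*) [CommRing R] : Prop :=
  ∀ a b : R, Ideal.span {a, b} = ⊤ → ∃ t : R, IsGelfandElem (a + b * t)

/-- A rectangular matrix admits diagonal reduction with successive divisibility
of the diagonal entries. -/
def AdmitsDiagReduction {R : Type*} [CommRing R] {n m : ℕ}
    (A : Matrix (Fin n) (Fin m) R) : Prop :=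
  ∃ (P : Matrix (Fin n) (Fin n) R) (Q : Matrix (Fin m) (Fin m) R),
    IsUnit P ∧ IsUnit Q ∧
    (∀ (i : Fin n) (j : Fin m), (i : ℕ) ≠ (j : ℕ) → (P * A * Q) i j = 0) ∧
    (∀ (k : ℕ) (hn : k + 1 < n) (hm : k + 1 < m),
      (P * A * Q) ⟨k, Nat.lt_of_succ_lt hn⟩ ⟨k, Nat.lt_of_succ_lt hm⟩ ∣
        (P * A * Q) ⟨k + 1, hn⟩ ⟨k + 1, hm⟩)

/-- Elementary divisor ring: every matrix admits diagonal reduction. -/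
def IsElementaryDivisorRing (R : Type*) [CommRing R] : Prop :=
  ∀ (n m : ℕ) (A : Matrix (Fin n) (Fin m) R), AdmitsDiagReduction A

/-!
Semiregularity of `S` amounts to: every `b ∈ S` has an idempotent `e ∈ bS` with
`b(1 - e) ∈ J(S)`. For `S = R/aR` with `R` Bezout, an adequate factorization `a = rs` relative
to `b` has `r` and `s` coprime (their gcd divides `s` and is coprime to `b`), and the idempotent
is the class of `vs`, where `ur + vs = 1`. Conversely, lift such an idempotent to `ε`
and put `r = gcd(a, 1 - ε)`, `a = rs`: regularity of `a` gives `s ∣ ε`, and any divisor of `s`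
coprime to `b` divides both `a` and a unit modulo `a`.
-/

section Semiregular

variable {S : Type*} [CommRing S]

theorem isSemiregularRing_iff_forall_exists_isIdempotentElem :
    IsSemiregularRing S ↔ ∀ b : S, ∃ e : S, IsIdempotentElem e ∧ b ∣ e ∧
      b * (1 - e) ∈ (⊥ : Ideal S).jacobson := by
  constructor
  · rintro ⟨hvnr, hlift⟩ b
    obtain ⟨X, hX⟩ := hvnr (Ideal.Quotient.mk _ b)
    obtain ⟨x, rfl⟩ := Ideal.Quotient.mk_surjective X
    rw [← map_mul, ← map_mul, Ideal.Quotient.eq] at hX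
    have hbx : IsIdempotentElem (Ideal.Quotient.mk (⊥ : Ideal S).jacobson (b * x)) := by
      rw [IsIdempotentElem, ← map_mul, Ideal.Quotient.eq]
      convert Ideal.mul_mem_left _ (-x) hX using 1
      ring
    obtain ⟨e, he, hex⟩ := hlift (b * x) hbx
    rw [Ideal.Quotient.eq] at hex
    obtain ⟨c, hc⟩ := isUnit_iff_exists.mp (Ideal.mem_jacobson_bot.mp hex (-1))
    have he' : e * e = e := he
    refine ⟨e, he, ⟨e * x * c, ?_⟩, ?_⟩
    · -- `e = e (1 - e + bx) c` and `e (1 - e) = 0`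
      linear_combination (-e) * hc.1 - c * he'
    · convert Ideal.sub_mem _ hX (Ideal.mul_mem_left _ b hex) using 1
      ring
  · intro h
    refine ⟨fun B => ?_, fun x hx => ?_⟩
    · obtain ⟨b, rfl⟩ := Ideal.Quotient.mk_surjective B
      obtain ⟨e, -, ⟨x, rfl⟩, hJ⟩ := h b
      refine ⟨Ideal.Quotient.mk _ x, ?_⟩
      rw [← map_mul, ← map_mul, Ideal.Quotient.eq]
      convert hJ using 1
      ring
    · rw [IsIdempotentElem, ← map_mul, Ideal.Quotient.eq] at hx
      obtain ⟨e, he, ⟨y, rfl⟩, hJ⟩ := h x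
      refine ⟨x * y, he, Ideal.Quotient.eq.mpr ?_⟩
      convert Ideal.sub_mem _ (Ideal.mul_mem_left _ (-y) hx) hJ using 1
      ring

end Semiregular

section Coprime

variable {R : Type*} [CommRing R]

theorem Ideal.span_pair_eq_top_iff_isCoprime {x y : R} :
    Ideal.span {x, y} = ⊤ ↔ IsCoprime x y := by
  rw [Ideal.span_insert, Ideal.sup_eq_top_iff_isCoprime]

theorem isUnit_mk_span_singleton_iff {a x : R} :
    IsUnit (Ideal.Quotient.mk (Ideal.span {a}) x) ↔ IsCoprime x a := by
  rw [isUnit_iff_exists, Ideal.Quotient.mk_surjective.exists]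
  simp only [mul_comm _ (Ideal.Quotient.mk _ x), and_self, ← map_mul,
    ← map_one (Ideal.Quotient.mk _), Ideal.Quotient.eq, Ideal.mem_span_singleton]
  constructor <;> rintro ⟨y, t, ht⟩ <;> exact ⟨y, -t, by linear_combination ht⟩

theorem mk_mem_jacobson_bot_iff {a x : R} :
    Ideal.Quotient.mk (Ideal.span {a}) x ∈ (⊥ : Ideal (R ⧸ Ideal.span {a})).jacobson ↔
      ∀ c : R, IsCoprime (x * c + 1) a := by
  simp only [Ideal.mem_jacobson_bot, Ideal.Quotient.mk_surjective.forall, ← map_mul,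
    ← map_one (Ideal.Quotient.mk _), ← map_add, isUnit_mk_span_singleton_iff]

theorem isAdequateElem_iff {a : R} :
    IsAdequateElem a ↔ ∀ b : R, ∃ r s : R, a = r * s ∧ IsCoprime r b ∧
      ∀ s' : R, s' ∣ s → IsCoprime s' b → IsUnit s' := by
  simp only [IsAdequateElem, Ideal.span_pair_eq_top_iff_isCoprime, ne_eq]
  refine forall_congr' fun b => exists₂_congr fun r s => and_congr_right' <| and_congr_right' ?_
  exact forall_congr' fun s' => by tauto

end Coprime

section Bezout

variable {R : Type*} [CommRing R] [IsBezout R]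

theorem IsAdequateElem.exists_isIdempotentElem {a : R} (ha : IsAdequateElem a) (b : R) :
    ∃ e : R ⧸ Ideal.span {a}, IsIdempotentElem e ∧ Ideal.Quotient.mk _ b ∣ e ∧
      Ideal.Quotient.mk _ b * (1 - e) ∈ (⊥ : Ideal (R ⧸ Ideal.span {a})).jacobson := by
  obtain ⟨r, s, rfl, hrb, hs⟩ := isAdequateElem_iff.mp ha b
  have hrs : IsCoprime r s := isRelPrime_iff_isCoprime.mp fun d hdr hds =>
    hs d hds (hrb.of_isCoprime_of_dvd_left hdr)
  obtain ⟨u, v, huv⟩ := hrs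
  obtain ⟨γ, β, hγβ⟩ := hrb
  refine ⟨Ideal.Quotient.mk _ (v * s), ?_, ⟨Ideal.Quotient.mk _ (β * (v * s)), ?_⟩, ?_⟩
  · rw [IsIdempotentElem, ← map_mul, Ideal.Quotient.eq, Ideal.mem_span_singleton]
    exact ⟨-(u * v), by linear_combination (v * s) * huv⟩
  · rw [← map_mul, Ideal.Quotient.eq, Ideal.mem_span_singleton]
    exact ⟨γ * v, by linear_combination (-(v * s)) * hγβ⟩
  · have h1e : Ideal.Quotient.mk (Ideal.span {r * s}) b * (1 - Ideal.Quotient.mk _ (v * s)) =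
        Ideal.Quotient.mk _ (b * (u * r)) := by
      rw [← map_one (Ideal.Quotient.mk _), ← map_sub, ← map_mul, ← huv, add_sub_cancel_right]
    rw [h1e, mk_mem_jacobson_bot_iff]
    intro c
    -- a common divisor of `1 + bcur` and `rs` is coprime to `r`, hence divides `s`
    have hwr : IsCoprime (b * (u * r) * c + 1) r := ⟨1, -(b * u * c), by ring⟩
    have hwb : IsCoprime (b * (u * r) * c + 1) b := ⟨1, -(u * r * c), by ring⟩
    exact isRelPrime_iff_isCoprime.mp fun g hgw hga =>
      hs g ((hwr.of_isCoprime_of_dvd_left hgw).dvd_of_dvd_mul_left hga)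
        (hwb.of_isCoprime_of_dvd_left hgw)

theorem isAdequateElem_of_forall_exists_isIdempotentElem {a : R} (ha : IsLeftRegular a)
    (h : ∀ b : R, ∃ e : R ⧸ Ideal.span {a}, IsIdempotentElem e ∧ Ideal.Quotient.mk _ b ∣ e ∧
      Ideal.Quotient.mk _ b * (1 - e) ∈ (⊥ : Ideal (R ⧸ Ideal.span {a})).jacobson) :
    IsAdequateElem a := by
  refine isAdequateElem_iff.mpr fun b => ?_
  obtain ⟨e, he, ⟨y, hy⟩, hJ⟩ := h b
  obtain ⟨ε, rfl⟩ := Ideal.Quotient.mk_surjective e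
  obtain ⟨ζ, rfl⟩ := Ideal.Quotient.mk_surjective y
  rw [IsIdempotentElem, ← map_mul, Ideal.Quotient.eq, Ideal.mem_span_singleton] at he
  rw [← map_mul, Ideal.Quotient.eq, Ideal.mem_span_singleton] at hy
  rw [← map_one (Ideal.Quotient.mk _), ← map_sub, ← map_mul, mk_mem_jacobson_bot_iff] at hJ
  obtain ⟨m, hm⟩ := he
  obtain ⟨n, hn⟩ := hy
  obtain ⟨s, hs⟩ := IsBezout.gcd_dvd_left a (1 - ε)
  obtain ⟨k, hk⟩ := IsBezout.gcd_dvd_right a (1 - ε)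
  obtain ⟨α, δ, hαδ⟩ := IsBezout.gcd_eq_sum a (1 - ε)
  set r := IsBezout.gcd a (1 - ε)
  have hr : IsLeftRegular r := by
    rw [hs, mul_comm] at ha
    exact ha.of_mul
  have hsε : s ∣ ε := by
    rw [← hr.dvd_cancel_left, ← hs]
    exact ⟨α * ε - δ * m, by linear_combination (-ε) * hαδ - δ * hm⟩
  refine ⟨r, s, hs, ⟨k + s * n, ζ, by linear_combination -hk - hn - n * hs⟩, fun s' hs's hs'b => ?_⟩
  obtain ⟨u, v, huv⟩ := hs'b
  -- `1 - vb(1 - ε) = us' + vbε` is a unit modulo `a` and divisible by `s'`, as is `a`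
  refine (hJ (-v)).isUnit_of_dvd' ?_ (hs's.trans ⟨r, by rw [hs, mul_comm]⟩)
  have hs'ε := hs's.trans hsε
  convert dvd_add (dvd_mul_left s' u) (hs'ε.mul_left (v * b)) using 1
  linear_combination -huv

end Bezout

theorem stmt9_general {R : Type*} [CommRing R] [IsBezout R]
    (a : R) (hreg : IsRegularElem a) :
    IsAdequateElem a ↔ IsSemiregularRing (R ⧸ Ideal.span ({a} : Set R)) := by
  have ha : IsLeftRegular a := fun x y (hxy : a * x = a * y) =>
    sub_eq_zero.mp (hreg.2 _ (by rw [mul_sub, hxy, sub_self]))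
  rw [isSemiregularRing_iff_forall_exists_isIdempotentElem, Ideal.Quotient.mk_surjective.forall]
  exact ⟨IsAdequateElem.exists_isIdempotentElem, isAdequateElem_of_forall_exists_isIdempotentElem ha⟩

theorem stmt9 {R : Type*} [CommRing R] [IsBezout R] (hR : HasStableRange2 R)
    (a : R) (hreg : IsRegularElem a) :
    IsAdequateElem a ↔ IsSemiregularRing (R ⧸ Ideal.span ({a} : Set R)) :=
  stmt9_general a hreg
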